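/- arXiv:1905.10534 — 3 statements merged into one kernel-verified Lean document; each statement's English description precedes it below -/
import Mathlib

section
/- Let B_R ⊂ ℝⁿ be an open ball (n ≥ 1), p > 0, and let H̃ : B_R → [0, ∞) be measurable with ∫_{B_R} H̃^{p/2} dx < ∞. Suppose there are constants c₁ > 0, t > 0, s > 0 and χ > 1 such that for every γ ≥ 0 and every pair of concentric balls B_{ϱ₁} ⋐ B_{ϱ₂} ⊂ B_R (with the same center as B_R) one has (∫_{B_{ϱ₁}} H̃^{(γ + p/2)χ} dx)^{1/χ} ≤ c₁ (1+γ)^t (ϱ₂ − ϱ₁)^{−s} ∫_{B_{ϱ₂}} H̃^{γ + p/2} dx (an inequality in [0, ∞]). Then there exists a constant c depending only on χ, s, t, p such that for every pair of concentric balls B_{τ₁} ⋐ B_{τ₂} ⊂ B_R it holds that ess sup_{B_{τ₁}} H̃ ≤ c [ c₁/(τ₂ − τ₁)^s ]^{(2/p)·χ/(χ−1)} (∫_{B_{τ₂}} H̃^{p/2} dx)^{2/p}. -/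
open MeasureTheory Filter
open scoped ENNReal Topology

lemma aux_essSup_le_liminf {α : Type*} [MeasurableSpace α] (μ : Measure α) [IsFiniteMeasure μ]
    (g : α → ℝ≥0∞) (hg : Measurable g) (q : ℕ → ℝ) (hq : ∀ k, 0 < q k)
    (hq' : Tendsto q atTop atTop) :
    essSup g μ ≤ liminf (fun k => (∫⁻ x, g x ^ q k ∂μ) ^ (1 / q k)) atTop := by
  refine ENNReal.le_of_forall_nnreal_lt (fun M hM => ?_)
  by_cases hM0 : (M : ℝ≥0∞) = 0
  · simp [hM0]
  set S : Set α := {x | (M : ℝ≥0∞) < g x} with hS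
  have hSm : MeasurableSet S := measurableSet_lt measurable_const hg
  have hm0 : 0 < μ S := by
    rcases eq_zero_or_pos (μ S) with h0 | h0
    · exfalso
      have : g ≤ᵐ[μ] fun _ => (M : ℝ≥0∞) := by
        rw [Filter.EventuallyLE, ae_iff]
        simpa [hS, not_le] using h0
      exact absurd (essSup_le_of_ae_le _ this) (not_le.mpr hM)
    · exact h0
  have hmtop : μ S ≠ ⊤ := (measure_lt_top μ S).ne
  have hlow : ∀ k, (M : ℝ≥0∞) * μ S ^ (1 / q k) ≤ (∫⁻ x, g x ^ q k ∂μ) ^ (1 / q k) := by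
    intro k
    have hqk : (0:ℝ) ≤ 1 / q k := (one_div_pos.mpr (hq k)).le
    have h1 : (M : ℝ≥0∞) ^ q k * μ S ≤ ∫⁻ x, g x ^ q k ∂μ := by
      calc (M : ℝ≥0∞) ^ q k * μ S = ∫⁻ _ in S, (M : ℝ≥0∞) ^ q k ∂μ := by
            rw [setLIntegral_const]
        _ ≤ ∫⁻ x in S, g x ^ q k ∂μ := by
            refine setLIntegral_mono (hg.pow_const _) (fun x hx => ?_)
            exact ENNReal.rpow_le_rpow (le_of_lt hx) (hq k).le
        _ ≤ ∫⁻ x, g x ^ q k ∂μ := setLIntegral_le_lintegral _ _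
    calc (M : ℝ≥0∞) * μ S ^ (1 / q k)
        = ((M : ℝ≥0∞) ^ q k * μ S) ^ (1 / q k) := by
          rw [ENNReal.mul_rpow_of_nonneg _ _ hqk, ← ENNReal.rpow_mul,
            mul_one_div_cancel (hq k).ne', ENNReal.rpow_one]
      _ ≤ (∫⁻ x, g x ^ q k ∂μ) ^ (1 / q k) := ENNReal.rpow_le_rpow h1 hqk
  have htend : Tendsto (fun k => (M : ℝ≥0∞) * μ S ^ (1 / q k)) atTop (𝓝 ((M : ℝ≥0∞) * 1)) := by
    have h0 : Tendsto (fun k => 1 / q k) atTop (𝓝 (0:ℝ)) := by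
      simp only [one_div]; exact hq'.inv_tendsto_atTop
    have hmr : (0:ℝ) < (μ S).toReal := ENNReal.toReal_pos hm0.ne' hmtop
    have hc : ContinuousAt (fun e : ℝ => ENNReal.ofReal ((μ S).toReal ^ e)) 0 :=
      ENNReal.continuous_ofReal.continuousAt.comp (Real.continuousAt_const_rpow hmr.ne')
    have hcont : Tendsto (fun k => ENNReal.ofReal ((μ S).toReal ^ (1 / q k))) atTop
        (𝓝 (ENNReal.ofReal ((μ S).toReal ^ (0 : ℝ)))) := hc.tendsto.comp h0
    have hrw : (fun k => ENNReal.ofReal ((μ S).toReal ^ (1 / q k)))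
        = fun k => μ S ^ (1 / q k) := by
      funext k
      rw [ENNReal.toReal_rpow, ENNReal.ofReal_toReal
        (ENNReal.rpow_ne_top_of_nonneg (one_div_pos.mpr (hq k)).le hmtop)]
    rw [hrw] at hcont
    simp only [Real.rpow_zero, ENNReal.ofReal_one] at hcont
    exact ENNReal.Tendsto.const_mul hcont (Or.inl one_ne_zero)
  have : (M : ℝ≥0∞) * 1 = liminf (fun k => (M : ℝ≥0∞) * μ S ^ (1 / q k)) atTop :=
    (htend.liminf_eq).symm
  rw [mul_one] at this
  rw [this]
  exact liminf_le_liminf (Eventually.of_forall hlow)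

set_option maxHeartbeats 1000000 in
/-- Classical Moser iteration (Lemma 6.1) with explicit constants: if a nonnegative
measurable `H` on a ball `B_R ⊂ ℝⁿ` with `∫_{B_R} H^{p/2} < ∞` satisfies, for every
`γ ≥ 0` and all concentric balls `B_{ϱ₁} ⋐ B_{ϱ₂} ⊂ B_R`,
`(∫_{B_{ϱ₁}} H^{(γ+p/2)χ})^{1/χ} ≤ c₁ (1+γ)^t (ϱ₂-ϱ₁)^{-s} ∫_{B_{ϱ₂}} H^{γ+p/2}`,
then `ess sup_{B_{τ₁}} H ≤ c [c₁/(τ₂-τ₁)^s]^{(2/p)·χ/(χ-1)} (∫_{B_{τ₂}} H^{p/2})^{2/p}`,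
with `c` depending only on `χ, s, t, p`. -/
theorem stmt_1 (p t s χ : ℝ) (hp : 0 < p) (ht : 0 < t) (hs : 0 < s) (hχ : 1 < χ) :
    ∃ c : ℝ, 0 < c ∧
      ∀ (n : ℕ) (_ : 1 ≤ n) (x₀ : EuclideanSpace ℝ (Fin n)) (R c₁ : ℝ)
        (H : EuclideanSpace ℝ (Fin n) → ℝ),
        0 < R → 0 < c₁ → Measurable H → (∀ x, 0 ≤ H x) →
        (∫⁻ x in Metric.ball x₀ R, ENNReal.ofReal (H x ^ (p / 2))) < ⊤ →
        (∀ γ : ℝ, 0 ≤ γ → ∀ ϱ₁ ϱ₂ : ℝ, 0 < ϱ₁ → ϱ₁ < ϱ₂ → ϱ₂ ≤ R →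
          (∫⁻ x in Metric.ball x₀ ϱ₁, ENNReal.ofReal (H x ^ ((γ + p / 2) * χ))) ^ (1 / χ) ≤
            ENNReal.ofReal (c₁ * (1 + γ) ^ t / (ϱ₂ - ϱ₁) ^ s) *
              ∫⁻ x in Metric.ball x₀ ϱ₂, ENNReal.ofReal (H x ^ (γ + p / 2))) →
        ∀ τ₁ τ₂ : ℝ, 0 < τ₁ → τ₁ < τ₂ → τ₂ ≤ R →
          essSup (fun x => ENNReal.ofReal (H x)) (volume.restrict (Metric.ball x₀ τ₁)) ≤
            ENNReal.ofReal (c * (c₁ / (τ₂ - τ₁) ^ s) ^ (2 / p * (χ / (χ - 1)))) *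
              (∫⁻ x in Metric.ball x₀ τ₂, ENNReal.ofReal (H x ^ (p / 2))) ^ (2 / p) := by
  have hχ0 : (0:ℝ) < χ := lt_trans one_pos hχ
  have hinv0 : (0:ℝ) < χ⁻¹ := inv_pos.mpr hχ0
  have hinv1 : χ⁻¹ < 1 := inv_lt_one_of_one_lt₀ hχ
  set K : ℝ := 2 ^ s * (1 + p / 2) ^ t * χ ^ t with hKdef
  have h2s : (1:ℝ) ≤ 2 ^ s := Real.one_le_rpow one_le_two hs.le
  have hpt : (1:ℝ) ≤ (1 + p / 2) ^ t := Real.one_le_rpow (by linarith) ht.le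
  have hχt : (1:ℝ) ≤ χ ^ t := Real.one_le_rpow hχ.le ht.le
  have hK1 : (1:ℝ) ≤ K := by
    calc (1:ℝ) = 1 * 1 * 1 := by ring
    _ ≤ 2 ^ s * (1 + p / 2) ^ t * χ ^ t := by
        gcongr <;> linarith
  have hK0 : (0:ℝ) < K := lt_of_lt_of_le one_pos hK1
  set ρ : ℝ := χ⁻¹ / (1 - χ⁻¹) ^ 2 + (1 - χ⁻¹)⁻¹ with hρdef
  have h1χ : (0:ℝ) < 1 - χ⁻¹ := by linarith
  have hρ0 : 0 < ρ := by positivity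
  have hsumρ : HasSum (fun j : ℕ => ((j:ℝ) + 1) * (χ⁻¹) ^ j) ρ := by
    have h1 : HasSum (fun j : ℕ => (j:ℝ) * (χ⁻¹) ^ j) (χ⁻¹ / (1 - χ⁻¹) ^ 2) :=
      hasSum_coe_mul_geometric_of_norm_lt_one (by rwa [Real.norm_eq_abs, abs_of_pos hinv0])
    have h2 : HasSum (fun j : ℕ => (χ⁻¹) ^ j) (1 - χ⁻¹)⁻¹ :=
      hasSum_geometric_of_lt_one hinv0.le hinv1
    have := h1.add h2
    convert this using 2 with j
    ring
  have hsumσ : HasSum (fun j : ℕ => (χ⁻¹) ^ j) (1 - χ⁻¹)⁻¹ :=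
    hasSum_geometric_of_lt_one hinv0.le hinv1
  have hsiginf : (1 - χ⁻¹)⁻¹ = χ / (χ - 1) := by
    have h1 : 1 - χ⁻¹ = (χ - 1) / χ := by field_simp
    rw [h1, inv_div]
  refine ⟨K ^ (2 / p * ρ), Real.rpow_pos_of_pos hK0 _, ?_⟩
  intro n hn x₀ R c₁ H hR hc₁ hHm hH0 hfin h τ₁ τ₂ hτ₁ hττ hτ₂R
  have hτd : (0:ℝ) < τ₂ - τ₁ := by linarith
  set ϱ : ℕ → ℝ := fun k => τ₁ + (τ₂ - τ₁) * (2:ℝ)⁻¹ ^ k with hϱdef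
  set q : ℕ → ℝ := fun k => p / 2 * χ ^ k with hqdef
  set γ : ℕ → ℝ := fun k => p / 2 * (χ ^ k - 1) with hγdef
  set I : ℕ → ℝ≥0∞ :=
    fun k => ∫⁻ x in Metric.ball x₀ (ϱ k), ENNReal.ofReal (H x ^ q k) with hIdef
  set A : ℕ → ℝ := fun k => c₁ * (1 + γ k) ^ t / (ϱ k - ϱ (k + 1)) ^ s with hAdef
  set Q : ℕ → ℝ := fun k => ∏ j ∈ Finset.range k, A j ^ (((χ:ℝ) ^ j)⁻¹) with hQdef
  set σ : ℕ → ℝ := fun k => ∑ j ∈ Finset.range k, (χ⁻¹) ^ j with hσdef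
  set B : ℝ := c₁ / (τ₂ - τ₁) ^ s with hBdef
  have hB0 : 0 < B := div_pos hc₁ (Real.rpow_pos_of_pos hτd _)
  have hχk : ∀ k : ℕ, (0:ℝ) < χ ^ k := fun k => pow_pos hχ0 k
  have hχk1 : ∀ k : ℕ, (1:ℝ) ≤ χ ^ k := fun k => one_le_pow₀ hχ.le
  have hq0 : ∀ k, 0 < q k := fun k => by
    simp only [hqdef]; positivity
  have hγ0 : ∀ k, 0 ≤ γ k := fun k => by
    simp only [hγdef]
    have := hχk1 k
    nlinarith
  have hϱd : ∀ k : ℕ, ϱ k - ϱ (k + 1) = (τ₂ - τ₁) * (2:ℝ)⁻¹ ^ (k + 1) := by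
    intro k
    simp only [hϱdef, pow_succ]
    ring
  have hϱdpos : ∀ k : ℕ, 0 < ϱ k - ϱ (k + 1) := by
    intro k; rw [hϱd k]; positivity
  have hϱpos : ∀ k : ℕ, 0 < ϱ k := fun k => by
    simp only [hϱdef]; positivity
  have hϱτ₂ : ∀ k : ℕ, ϱ k ≤ τ₂ := by
    intro k
    simp only [hϱdef]
    have h1 : (2:ℝ)⁻¹ ^ k ≤ 1 := pow_le_one₀ (by norm_num) (by norm_num)
    nlinarith
  have hϱ0 : ϱ 0 = τ₂ := by simp [hϱdef]
  have hq0' : q 0 = p / 2 := by simp [hqdef]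
  have hA0 : ∀ k, 0 < A k := by
    intro k
    have h1 : (0:ℝ) < (1 + γ k) ^ t := Real.rpow_pos_of_pos (by have := hγ0 k; linarith) _
    have h2 : (0:ℝ) < (ϱ k - ϱ (k + 1)) ^ s := Real.rpow_pos_of_pos (hϱdpos k) _
    simp only [hAdef]
    positivity
  have hQ0 : ∀ k, 0 < Q k := by
    intro k
    simp only [hQdef]
    exact Finset.prod_pos fun j _ => Real.rpow_pos_of_pos (hA0 j) _
  -- recursion
  have hrec : ∀ k, I (k + 1) ≤ (ENNReal.ofReal (A k) * I k) ^ χ := by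
    intro k
    have e1 : γ k + p / 2 = q k := by simp only [hγdef, hqdef]; ring
    have e2 : (γ k + p / 2) * χ = q (k + 1) := by
      simp only [hγdef, hqdef, pow_succ]; ring
    have hh := h (γ k) (hγ0 k) (ϱ (k + 1)) (ϱ k) (hϱpos (k + 1))
      (by linarith [hϱdpos k]) (le_trans (hϱτ₂ k) hτ₂R)
    rw [e2, e1] at hh
    have h3 : (I (k + 1) ^ (1 / χ)) ^ χ ≤ (ENNReal.ofReal (A k) * I k) ^ χ :=
      ENNReal.rpow_le_rpow hh hχ0.le
    rwa [← ENNReal.rpow_mul, one_div_mul_cancel hχ0.ne', ENNReal.rpow_one] at h3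
  -- induction
  have hind : ∀ k, I k ≤ ENNReal.ofReal (Q k ^ ((χ:ℝ) ^ k)) * I 0 ^ ((χ:ℝ) ^ k) := by
    intro k
    induction k with
    | zero => simp [hQdef]
    | succ k ih =>
      have key : (A k * Q k ^ ((χ:ℝ) ^ k)) ^ χ = Q (k + 1) ^ ((χ:ℝ) ^ (k + 1)) := by
        have hQsucc : Q (k + 1) = Q k * A k ^ (((χ:ℝ) ^ k)⁻¹) := by
          simp only [hQdef]; rw [Finset.prod_range_succ]
        have hexp : ((χ:ℝ) ^ k)⁻¹ * ((χ:ℝ) ^ k * χ) = χ := by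
          field_simp
        rw [hQsucc, pow_succ,
          Real.mul_rpow (hQ0 k).le (Real.rpow_nonneg (hA0 k).le _),
          ← Real.rpow_mul (hA0 k).le, hexp,
          Real.mul_rpow (hA0 k).le (Real.rpow_nonneg (hQ0 k).le _),
          ← Real.rpow_mul (hQ0 k).le, mul_comm]
      calc I (k + 1) ≤ (ENNReal.ofReal (A k) * I k) ^ χ := hrec k
        _ ≤ (ENNReal.ofReal (A k) *
              (ENNReal.ofReal (Q k ^ ((χ:ℝ) ^ k)) * I 0 ^ ((χ:ℝ) ^ k))) ^ χ :=
            ENNReal.rpow_le_rpow (mul_le_mul_right ih _) hχ0.le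
        _ = ENNReal.ofReal (Q (k + 1) ^ ((χ:ℝ) ^ (k + 1))) * I 0 ^ ((χ:ℝ) ^ (k + 1)) := by
            rw [← mul_assoc, ← ENNReal.ofReal_mul (hA0 k).le,
              ENNReal.mul_rpow_of_nonneg _ _ hχ0.le,
              ENNReal.ofReal_rpow_of_pos (mul_pos (hA0 k) (Real.rpow_pos_of_pos (hQ0 k) _)),
              ← ENNReal.rpow_mul, key, pow_succ]
  -- root step
  have hroot : ∀ k, I k ^ (1 / q k) ≤
      ENNReal.ofReal (Q k ^ (2 / p)) * I 0 ^ (2 / p) := by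
    intro k
    have hexp2 : (χ:ℝ) ^ k * (1 / q k) = 2 / p := by
      simp only [hqdef]
      field_simp
    have h1 := ENNReal.rpow_le_rpow (hind k) (one_div_pos.mpr (hq0 k)).le
    rwa [ENNReal.mul_rpow_of_nonneg _ _ (one_div_pos.mpr (hq0 k)).le,
      ← ENNReal.rpow_mul, hexp2,
      ENNReal.ofReal_rpow_of_pos (Real.rpow_pos_of_pos (hQ0 k) _),
      ← Real.rpow_mul (hQ0 k).le, hexp2] at h1
  -- bound on A
  have hAb : ∀ j : ℕ, A j ≤ B * K ^ (j + 1) := by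
    intro j
    have h2pos : (0:ℝ) < (2:ℝ) ^ s := Real.rpow_pos_of_pos two_pos _
    have hden : (ϱ j - ϱ (j + 1)) ^ s = (τ₂ - τ₁) ^ s * (((2:ℝ) ^ s) ^ (j + 1))⁻¹ := by
      rw [hϱd j, Real.mul_rpow hτd.le (by positivity), inv_pow, Real.inv_rpow (by positivity)]
      congr 1
      rw [← Real.rpow_natCast (2:ℝ) (j + 1), ← Real.rpow_mul (by norm_num : (0:ℝ) ≤ 2),
        mul_comm, Real.rpow_mul (by norm_num : (0:ℝ) ≤ 2), Real.rpow_natCast]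
    have hAj : A j = c₁ * ((1 + γ j) ^ t * ((2:ℝ) ^ s) ^ (j + 1)) / (τ₂ - τ₁) ^ s := by
      simp only [hAdef]
      rw [hden]
      have hts : (0:ℝ) < (τ₂ - τ₁) ^ s := Real.rpow_pos_of_pos hτd _
      field_simp
    have hχjt : ((χ:ℝ) ^ j) ^ t = (χ ^ t) ^ j := by
      rw [← Real.rpow_natCast χ j, ← Real.rpow_mul hχ0.le, mul_comm,
        Real.rpow_mul hχ0.le, Real.rpow_natCast]
    have hcore : (1 + γ j) ^ t * ((2:ℝ) ^ s) ^ (j + 1) ≤ K ^ (j + 1) := by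
      have h1 : 1 + γ j ≤ (1 + p / 2) * χ ^ j := by
        have := hχk1 j
        simp only [hγdef]
        nlinarith
      have h2 : (1 + γ j) ^ t ≤ ((1 + p / 2) * χ ^ j) ^ t :=
        Real.rpow_le_rpow (by have := hγ0 j; linarith) h1 ht.le
      have h3 : ((1 + p / 2) * χ ^ j) ^ t = (1 + p / 2) ^ t * (χ ^ t) ^ j := by
        rw [Real.mul_rpow (by linarith) (hχk j).le, hχjt]
      have h4 : (1 + p / 2) ^ t * (χ ^ t) ^ j ≤
          ((1 + p / 2) ^ t) ^ (j + 1) * (χ ^ t) ^ (j + 1) := by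
        have ha := le_self_pow₀ hpt (Nat.succ_ne_zero j)
        have hb : (χ ^ t) ^ j ≤ (χ ^ t) ^ (j + 1) :=
          pow_le_pow_right₀ hχt (Nat.le_succ j)
        exact mul_le_mul ha hb (by positivity) (by positivity)
      have h5 : (1 + γ j) ^ t ≤ ((1 + p / 2) ^ t) ^ (j + 1) * (χ ^ t) ^ (j + 1) :=
        le_trans h2 (le_trans (le_of_eq h3) h4)
      calc (1 + γ j) ^ t * ((2:ℝ) ^ s) ^ (j + 1)
          ≤ (((1 + p / 2) ^ t) ^ (j + 1) * (χ ^ t) ^ (j + 1)) * ((2:ℝ) ^ s) ^ (j + 1) :=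
            mul_le_mul_of_nonneg_right h5 (by positivity)
        _ = K ^ (j + 1) := by simp only [hKdef, mul_pow]; ring
    rw [hAj, hBdef, div_mul_eq_mul_div]
    have hts : (0:ℝ) < (τ₂ - τ₁) ^ s := Real.rpow_pos_of_pos hτd _
    gcongr
  -- bound on Q
  have hQb : ∀ k, Q k ≤ B ^ (σ k) * K ^ ρ := by
    intro k
    have step1 : Q k ≤ ∏ j ∈ Finset.range k, (B * K ^ (j + 1)) ^ (((χ:ℝ) ^ j)⁻¹) := by
      simp only [hQdef]
      refine Finset.prod_le_prod (fun j _ => (Real.rpow_pos_of_pos (hA0 j) _).le)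
        (fun j _ => Real.rpow_le_rpow (hA0 j).le (hAb j) (by positivity))
    have step2 : ∀ j : ℕ, (B * K ^ (j + 1)) ^ (((χ:ℝ) ^ j)⁻¹) =
        B ^ ((χ⁻¹:ℝ) ^ j) * K ^ (((j:ℝ) + 1) * (χ⁻¹:ℝ) ^ j) := by
      intro j
      rw [Real.mul_rpow hB0.le (by positivity), inv_pow]
      congr 1
      rw [← Real.rpow_natCast K (j + 1), ← Real.rpow_mul hK0.le]
      congr 1
      push_cast
      ring
    have step3 : ∏ j ∈ Finset.range k, (B * K ^ (j + 1)) ^ (((χ:ℝ) ^ j)⁻¹) =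
        B ^ (σ k) * K ^ (∑ j ∈ Finset.range k, ((j:ℝ) + 1) * (χ⁻¹:ℝ) ^ j) := by
      simp only [step2]
      rw [Finset.prod_mul_distrib, hσdef,
        Real.rpow_sum_of_pos hB0, Real.rpow_sum_of_pos hK0]
    have step4 : K ^ (∑ j ∈ Finset.range k, ((j:ℝ) + 1) * (χ⁻¹:ℝ) ^ j) ≤ K ^ ρ :=
      Real.rpow_le_rpow_of_exponent_le hK1
        (sum_le_hasSum _ (fun j _ => by positivity) hsumρ)
    calc Q k ≤ _ := step1
      _ = _ := step3
      _ ≤ B ^ (σ k) * K ^ ρ :=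
          mul_le_mul_of_nonneg_left step4 (Real.rpow_pos_of_pos hB0 _).le
  -- limit setup
  haveI : IsFiniteMeasure (volume.restrict (Metric.ball x₀ τ₁)) :=
    ⟨by rw [Measure.restrict_apply_univ]; exact measure_ball_lt_top⟩
  have hqtend : Tendsto q atTop atTop := by
    simp only [hqdef]
    exact Tendsto.const_mul_atTop (by positivity)
      (tendsto_pow_atTop_atTop_of_one_lt hχ)
  have h_ess := aux_essSup_le_liminf (volume.restrict (Metric.ball x₀ τ₁))
    (fun x => ENNReal.ofReal (H x)) (ENNReal.measurable_ofReal.comp hHm) q hq0 hqtend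
  set v : ℕ → ℝ≥0∞ :=
    fun k => ENNReal.ofReal ((B ^ (σ k) * K ^ ρ) ^ (2 / p)) * I 0 ^ (2 / p) with hvdef
  have huv : ∀ k,
      (∫⁻ x in Metric.ball x₀ τ₁, (ENNReal.ofReal (H x)) ^ q k) ^ (1 / q k) ≤ v k := by
    intro k
    have e1 : ∫⁻ x in Metric.ball x₀ τ₁, (ENNReal.ofReal (H x)) ^ q k
        = ∫⁻ x in Metric.ball x₀ τ₁, ENNReal.ofReal (H x ^ q k) := by
      congr 1
      funext x
      rw [ENNReal.ofReal_rpow_of_nonneg (hH0 x) (hq0 k).le]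
    have e2 : (∫⁻ x in Metric.ball x₀ τ₁, ENNReal.ofReal (H x ^ q k)) ≤ I k := by
      refine lintegral_mono_set (Metric.ball_subset_ball ?_)
      simp only [hϱdef]
      nlinarith [pow_pos (by norm_num : (0:ℝ) < (2:ℝ)⁻¹) k]
    calc (∫⁻ x in Metric.ball x₀ τ₁, (ENNReal.ofReal (H x)) ^ q k) ^ (1 / q k)
        ≤ I k ^ (1 / q k) := by
          rw [e1]; exact ENNReal.rpow_le_rpow e2 (one_div_pos.mpr (hq0 k)).le
      _ ≤ ENNReal.ofReal (Q k ^ (2 / p)) * I 0 ^ (2 / p) := hroot k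
      _ ≤ v k := by
          refine mul_le_mul_left (ENNReal.ofReal_le_ofReal ?_) _
          exact Real.rpow_le_rpow (hQ0 k).le (hQb k) (by positivity)
  have hσtend : Tendsto σ atTop (𝓝 ((1 - χ⁻¹)⁻¹)) := hsumσ.tendsto_sum_nat
  have hLpos : (0:ℝ) < (B ^ ((1 - χ⁻¹)⁻¹) * K ^ ρ) ^ (2 / p) := by
    have := Real.rpow_pos_of_pos hB0 ((1 - χ⁻¹)⁻¹)
    have := Real.rpow_pos_of_pos hK0 ρ
    positivity
  have hvtend : Tendsto v atTop
      (𝓝 (ENNReal.ofReal ((B ^ ((1 - χ⁻¹)⁻¹) * K ^ ρ) ^ (2 / p)) * I 0 ^ (2 / p))) := by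
    have c1 : ContinuousAt (fun y : ℝ => B ^ y) ((1 - χ⁻¹)⁻¹) :=
      Real.continuousAt_const_rpow hB0.ne'
    have c2 : ContinuousAt (fun y : ℝ => B ^ y * K ^ ρ) ((1 - χ⁻¹)⁻¹) :=
      c1.mul continuousAt_const
    have c3 : ContinuousAt (fun y : ℝ => (B ^ y * K ^ ρ) ^ (2 / p)) ((1 - χ⁻¹)⁻¹) :=
      (Real.continuousAt_rpow_const _ _ (Or.inr (by positivity))).comp c2
    have c4 : ContinuousAt
        (fun y : ℝ => ENNReal.ofReal ((B ^ y * K ^ ρ) ^ (2 / p))) ((1 - χ⁻¹)⁻¹) :=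
      ENNReal.continuous_ofReal.continuousAt.comp c3
    exact ENNReal.Tendsto.mul_const (c4.tendsto.comp hσtend)
      (Or.inl (ENNReal.ofReal_pos.mpr hLpos).ne')
  have hfinal : liminf (fun k =>
      (∫⁻ x in Metric.ball x₀ τ₁, (ENNReal.ofReal (H x)) ^ q k) ^ (1 / q k)) atTop ≤
      ENNReal.ofReal ((B ^ ((1 - χ⁻¹)⁻¹) * K ^ ρ) ^ (2 / p)) * I 0 ^ (2 / p) := by
    calc liminf (fun k =>
        (∫⁻ x in Metric.ball x₀ τ₁, (ENNReal.ofReal (H x)) ^ q k) ^ (1 / q k)) atTop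
        ≤ liminf v atTop := liminf_le_liminf (Eventually.of_forall huv)
      _ = _ := hvtend.liminf_eq
  have hI0 : I 0 = ∫⁻ x in Metric.ball x₀ τ₂, ENNReal.ofReal (H x ^ (p / 2)) := by
    simp only [hIdef, hϱ0, hq0']
  have hconst : (B ^ ((1 - χ⁻¹)⁻¹) * K ^ ρ) ^ (2 / p) =
      K ^ (2 / p * ρ) * B ^ (2 / p * (χ / (χ - 1))) := by
    rw [hsiginf, Real.mul_rpow (Real.rpow_pos_of_pos hB0 _).le
        (Real.rpow_pos_of_pos hK0 _).le,
      ← Real.rpow_mul hB0.le, ← Real.rpow_mul hK0.le, mul_comm (χ / (χ - 1)),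
      mul_comm ρ, mul_comm (B ^ _)]
  refine le_trans h_ess (le_trans hfinal ?_)
  rw [hI0, hconst, hBdef]
end

section
/- Let B_r ⊂ ℝⁿ be an open ball with radius r ≤ 1, let p > 1, k ≥ 1, and f ∈ L^p(B_r, ℝ^k). Let α ∈ (0,1], S ≥ 1, K ≥ 1, and let B_ϱ be the concentric ball of radius ϱ < r. Assume that (∫_{B_ϱ} |f(x+h) − f(x)|^p dx)^{1/p} ≤ S |h|^α for every h ∈ ℝⁿ with 0 < |h| ≤ (r − ϱ)/K. Then for every β ∈ (0, α) one has ‖f‖_{L^p(B_ϱ)} + [f]_{β,p;B_ϱ} ≤ (c/(α − β)^{1/p}) ((r − ϱ)/K)^{α − β} S + c (K/(r − ϱ))^{n/p + β} ‖f‖_{L^p(B_r)}, where c is a constant depending only on n and p. -/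
open MeasureTheory
open scoped ENNReal

/-- The Gagliardo seminorm `[g]_{σ,p;U}` of a map `g : U ⊆ ℝⁿ → F`. -/
noncomputable def gagliardoSeminorm {n : ℕ} {F : Type*} [NormedAddCommGroup F]
    (U : Set (EuclideanSpace ℝ (Fin n))) (g : EuclideanSpace ℝ (Fin n) → F) (σ p : ℝ) : ℝ≥0∞ :=
  (∫⁻ x in U, ∫⁻ y in U,
      (‖g x - g y‖₊ : ℝ≥0∞) ^ p / edist x y ^ ((n : ℝ) + σ * p)) ^ (1 / p)

/-- The `L^p(U)` norm of a map `g : U ⊆ ℝⁿ → F`. -/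
noncomputable def lpNormOn {n : ℕ} {F : Type*} [NormedAddCommGroup F]
    (U : Set (EuclideanSpace ℝ (Fin n))) (g : EuclideanSpace ℝ (Fin n) → F) (p : ℝ) : ℝ≥0∞ :=
  (∫⁻ x in U, (‖g x‖₊ : ℝ≥0∞) ^ p) ^ (1 / p)

/-!
Split the Gagliardo double integral at `|x - y| = δ := (r - ϱ) / K`. Away from the diagonal
`|x - y|^{-(n + βp)} ≤ δ^{-(n + βp)}` and `|f x - f y|^p ≤ 2^{p-1} (|f x|^p + |f y|^p)`, which
produces the `L^p` term. Near the diagonal, substituting `x = y + h` and integrating the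
Nikol'skii bound in `y` first leaves `S^p ∫_{|h| ≤ δ} |h|^{(α-β)p - n} dh`, which polar
coordinates evaluate to `n |B₁| δ^{(α-β)p} / ((α - β) p)`; this is where `(α - β)^{-1/p}`
comes from.
-/

open Set Metric

theorem setLIntegral_setLIntegral_nnnorm_sub_rpow_le {α F : Type*} [MeasurableSpace α]
    {ν : Measure α} [NormedAddCommGroup F] [MeasurableSpace F] [BorelSpace F] {f : α → F}
    (hf : Measurable f) {p : ℝ} (hp : 1 ≤ p) (B : Set α) :
    ∫⁻ x in B, ∫⁻ y in B, (‖f x - f y‖₊ : ℝ≥0∞) ^ p ∂ν ∂ν ≤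
      2 ^ p * ν B * ∫⁻ x in B, (‖f x‖₊ : ℝ≥0∞) ^ p ∂ν := by
  set a : α → ℝ≥0∞ := fun x => (‖f x‖₊ : ℝ≥0∞) ^ p
  have ha : Measurable a := by fun_prop
  have hpt : ∀ x y, (‖f x - f y‖₊ : ℝ≥0∞) ^ p ≤ 2 ^ (p - 1) * (a x + a y) := fun x y =>
    calc (‖f x - f y‖₊ : ℝ≥0∞) ^ p ≤ ((‖f x‖₊ : ℝ≥0∞) + ‖f y‖₊) ^ p := by
          gcongr
          exact_mod_cast nnnorm_sub_le _ _
      _ ≤ 2 ^ (p - 1) * (a x + a y) := ENNReal.rpow_add_le_mul_rpow_add_rpow _ _ hp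
  have hc : (2 : ℝ≥0∞) ^ (p - 1) ≠ ⊤ := by simp
  calc ∫⁻ x in B, ∫⁻ y in B, (‖f x - f y‖₊ : ℝ≥0∞) ^ p ∂ν ∂ν
      ≤ ∫⁻ x in B, ∫⁻ y in B, 2 ^ (p - 1) * (a x + a y) ∂ν ∂ν := by
        gcongr with x y; exact hpt x y
    _ = 2 ^ (p - 1) * 2 * ν B * ∫⁻ x in B, a x ∂ν := by
        simp_rw [lintegral_const_mul' _ _ hc, lintegral_add_left measurable_const,
          setLIntegral_const, lintegral_add_right _ measurable_const, lintegral_mul_const _ ha,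
          setLIntegral_const]
        ring
    _ = 2 ^ p * ν B * ∫⁻ x in B, a x ∂ν := by
        conv_rhs => rw [← sub_add_cancel p 1,
          ENNReal.rpow_add _ _ two_ne_zero ENNReal.ofNat_ne_top, ENNReal.rpow_one]

theorem setLIntegral_setLIntegral_le_lintegral_add {G : Type*} [AddGroup G] [MeasurableSpace G]
    [MeasurableAdd₂ G] (μ : Measure G) [SFinite μ] [μ.IsAddLeftInvariant] {Φ : G → G → ℝ≥0∞}
    (hΦ : Measurable (Function.uncurry Φ)) (B : Set G) :
    ∫⁻ x in B, ∫⁻ y in B, Φ x y ∂μ ∂μ ≤ ∫⁻ h, ∫⁻ y in B, Φ (y + h) y ∂μ ∂μ :=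
  calc ∫⁻ x in B, ∫⁻ y in B, Φ x y ∂μ ∂μ = ∫⁻ y in B, ∫⁻ x in B, Φ x y ∂μ ∂μ :=
        lintegral_lintegral_swap hΦ.aemeasurable
    _ ≤ ∫⁻ y in B, ∫⁻ x, Φ x y ∂μ ∂μ := by
        gcongr with y; exact Measure.restrict_le_self
    _ = ∫⁻ y in B, ∫⁻ h, Φ (y + h) y ∂μ ∂μ := by
        congr 1 with y; exact (lintegral_add_left_eq_self (Φ · y) y).symm
    _ = ∫⁻ h, ∫⁻ y in B, Φ (y + h) y ∂μ ∂μ :=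
        lintegral_lintegral_swap
          (hΦ.comp ((measurable_fst.add measurable_snd).prodMk measurable_fst)).aemeasurable

theorem setLIntegral_setLIntegral_div_edist_rpow_le {E : Type*} [NormedAddCommGroup E]
    [MeasurableSpace E] [BorelSpace E] [SecondCountableTopology E] (μ : Measure E) [SFinite μ]
    [μ.IsAddLeftInvariant] {D : E → E → ℝ≥0∞} (hD : Measurable (Function.uncurry D))
    (B : Set E) {q δ : ℝ} (hq : 0 ≤ q) :
    ∫⁻ x in B, ∫⁻ y in B, D x y / edist x y ^ q ∂μ ∂μ ≤
      ∫⁻ h in closedBall 0 δ, (∫⁻ y in B, D (y + h) y ∂μ) / ‖h‖ₑ ^ q ∂μ +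
        (∫⁻ x in B, ∫⁻ y in B, D x y ∂μ ∂μ) / ENNReal.ofReal δ ^ q := by
  set Φ : E → E → ℝ≥0∞ := fun x y => if ‖x - y‖ ≤ δ then D x y / edist x y ^ q else 0
  have hΦ : Measurable (Function.uncurry Φ) :=
    Measurable.ite (measurableSet_le (by fun_prop) measurable_const)
      (hD.div (by fun_prop)) measurable_const
  have hsplit : ∀ x y, D x y / edist x y ^ q ≤ Φ x y + D x y / ENNReal.ofReal δ ^ q := by
    intro x y
    by_cases hxy : ‖x - y‖ ≤ δ
    · simp only [Φ, if_pos hxy]; exact le_self_add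
    · simp only [Φ, if_neg hxy, zero_add]
      gcongr
      rw [edist_dist, dist_eq_norm]
      exact ENNReal.ofReal_le_ofReal (not_le.1 hxy).le
  have hnear : ∀ h, ∫⁻ y in B, Φ (y + h) y ∂μ =
      (closedBall (0 : E) δ).indicator (fun h => (∫⁻ y in B, D (y + h) y ∂μ) / ‖h‖ₑ ^ q) h := by
    intro h
    by_cases hh : ‖h‖ ≤ δ
    · have hm : Measurable fun y => D (y + h) y :=
        hD.comp ((measurable_add_const h).prodMk measurable_id)
      rw [indicator_of_mem (mem_closedBall_zero_iff.2 hh), div_eq_mul_inv,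
        ← lintegral_mul_const _ hm]
      simp [Φ, hh, edist_dist, div_eq_mul_inv]
    · rw [indicator_of_notMem (fun h' => hh (mem_closedBall_zero_iff.1 h'))]
      simp [Φ, hh]
  have hΦx : ∀ x, Measurable (Φ x) := fun x => hΦ.comp measurable_prodMk_left
  have hDx : ∀ x, Measurable (D x) := fun x => hD.comp measurable_prodMk_left
  have hΦint : Measurable fun x => ∫⁻ y in B, Φ x y ∂μ := hΦ.lintegral_prod_right'
  have hDint : Measurable fun x => ∫⁻ y in B, D x y ∂μ := hD.lintegral_prod_right'
  calc ∫⁻ x in B, ∫⁻ y in B, D x y / edist x y ^ q ∂μ ∂μ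
      ≤ ∫⁻ x in B, ∫⁻ y in B, (Φ x y + D x y / ENNReal.ofReal δ ^ q) ∂μ ∂μ := by
        gcongr with x y; exact hsplit x y
    _ = (∫⁻ x in B, ∫⁻ y in B, Φ x y ∂μ ∂μ) +
          (∫⁻ x in B, ∫⁻ y in B, D x y ∂μ ∂μ) / ENNReal.ofReal δ ^ q := by
        simp_rw [lintegral_add_left (hΦx _), div_eq_mul_inv, lintegral_mul_const _ (hDx _)]
        rw [lintegral_add_left hΦint, lintegral_mul_const _ hDint]
    _ ≤ _ := by
        refine add_le_add_left ((setLIntegral_setLIntegral_le_lintegral_add μ hΦ B).trans_eq ?_) _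
        simp_rw [hnear]
        exact lintegral_indicator measurableSet_closedBall _

section AddHaar

variable {E : Type*} [NormedAddCommGroup E] [NormedSpace ℝ E] [FiniteDimensional ℝ E]
  [MeasurableSpace E] [BorelSpace E] [Nontrivial E] (μ : Measure E) [μ.IsAddHaarMeasure]

theorem lintegral_closedBall_norm_rpow {s δ : ℝ} (hs : 0 < s) (hδ : 0 ≤ δ) :
    ∫⁻ x in closedBall (0 : E) δ, ENNReal.ofReal (‖x‖ ^ (s - Module.finrank ℝ E)) ∂μ =
      ENNReal.ofReal (Module.finrank ℝ E * μ.real (ball 0 1) / s * δ ^ s) := by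
  set d := Module.finrank ℝ E
  have hd : 1 ≤ d := Module.finrank_pos
  let g : ℝ → ℝ := (Iic δ).indicator fun t => t ^ (s - d)
  have hradial : ∀ y ∈ Ioi (0 : ℝ), y ^ (d - 1) • g y = (Ioc 0 δ).indicator (· ^ (s - 1)) y := by
    intro y (hy : 0 < y)
    by_cases hyδ : y ≤ δ
    · rw [indicator_of_mem (show y ∈ Ioc 0 δ from ⟨hy, hyδ⟩), smul_eq_mul,
        show g y = y ^ (s - d) from indicator_of_mem (show y ∈ Iic δ from hyδ) _,
        ← Real.rpow_natCast, ← Real.rpow_add hy, Nat.cast_sub hd, Nat.cast_one]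
      ring_nf
    · rw [indicator_of_notMem (fun h => hyδ h.2),
        show g y = 0 from indicator_of_notMem (show y ∉ Iic δ from hyδ) _, smul_zero]
  have hpow : IntegrableOn (· ^ (s - 1)) (Ioc 0 δ) :=
    (intervalIntegrable_iff_integrableOn_Ioc_of_le hδ).1
      (intervalIntegral.intervalIntegrable_rpow' (by linarith))
  have hint : Integrable (fun x : E => g ‖x‖) μ := by
    rw [integrable_fun_norm_addHaar μ, integrableOn_congr_fun hradial measurableSet_Ioi]
    exact (hpow.integrable_indicator measurableSet_Ioc).integrableOn
  have hval : ∫ x, g ‖x‖ ∂μ = d * μ.real (ball 0 1) / s * δ ^ s := by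
    rw [integral_fun_norm_addHaar μ, setIntegral_congr_fun measurableSet_Ioi hradial,
      setIntegral_indicator measurableSet_Ioc, inter_comm, Ioc_inter_Ioi, max_self,
      ← intervalIntegral.integral_of_le hδ, integral_rpow (Or.inl (by linarith)), sub_add_cancel,
      Real.zero_rpow hs.ne', nsmul_eq_mul, smul_eq_mul]
    ring
  have hlhs : ∫⁻ x in closedBall (0 : E) δ, ENNReal.ofReal (‖x‖ ^ (s - d)) ∂μ =
      ∫⁻ x, ENNReal.ofReal (g ‖x‖) ∂μ := by
    rw [← lintegral_indicator measurableSet_closedBall]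
    congr 1 with x
    by_cases hx : ‖x‖ ≤ δ <;> simp [g, hx]
  rw [hlhs, ← ofReal_integral_eq_lintegral_ofReal hint, hval]
  exact .of_forall fun x => indicator_nonneg (fun t _ => Real.rpow_nonneg (norm_nonneg x) _) _

theorem setLIntegral_closedBall_div_norm_rpow_le {ω : E → ℝ≥0∞}
    {p α β S δ : ℝ} (hp : 0 < p) (hβα : β < α) (hS : 0 ≤ S) (hδ : 0 ≤ δ) (hω₀ : ω 0 = 0)
    (hω : ∀ h : E, 0 < ‖h‖ → ‖h‖ ≤ δ → ω h ^ (1 / p) ≤ ENNReal.ofReal (S * ‖h‖ ^ α)) :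
    ∫⁻ h in closedBall 0 δ, ω h / ‖h‖ₑ ^ (Module.finrank ℝ E + β * p) ∂μ ≤
      ENNReal.ofReal (S ^ p * (Module.finrank ℝ E * μ.real (ball 0 1) / ((α - β) * p) *
        δ ^ ((α - β) * p))) := by
  set d : ℝ := (Module.finrank ℝ E : ℝ)
  set s := (α - β) * p
  have hs : 0 < s := mul_pos (by linarith) hp
  have hpt : ∀ h ∈ closedBall (0 : E) δ,
      ω h / ‖h‖ₑ ^ (d + β * p) ≤ ENNReal.ofReal (S ^ p) * ENNReal.ofReal (‖h‖ ^ (s - d)) := by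
    intro h hh
    rcases eq_or_ne h 0 with rfl | h0
    · simp [hω₀]
    have hpos : 0 < ‖h‖ := norm_pos_iff.2 h0
    calc ω h / ‖h‖ₑ ^ (d + β * p)
        ≤ ENNReal.ofReal (S * ‖h‖ ^ α) ^ p / ENNReal.ofReal ‖h‖ ^ (d + β * p) := by
          rw [← ofReal_norm]
          gcongr
          exact (ENNReal.rpow_inv_le_iff hp).1
            (one_div p ▸ hω h hpos (mem_closedBall_zero_iff.1 hh))
      _ = ENNReal.ofReal (S ^ p * ‖h‖ ^ (s - d)) := by
          rw [ENNReal.ofReal_rpow_of_nonneg (by positivity) hp.le, ENNReal.ofReal_rpow_of_pos hpos,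
            ← ENNReal.ofReal_div_of_pos (by positivity), Real.mul_rpow hS (by positivity),
            ← Real.rpow_mul hpos.le, mul_div_assoc, ← Real.rpow_sub hpos]
          congr 3
          ring
      _ = ENNReal.ofReal (S ^ p) * ENNReal.ofReal (‖h‖ ^ (s - d)) :=
          ENNReal.ofReal_mul (by positivity)
  calc ∫⁻ h in closedBall 0 δ, ω h / ‖h‖ₑ ^ (d + β * p) ∂μ
      ≤ ∫⁻ h in closedBall 0 δ, ENNReal.ofReal (S ^ p) * ENNReal.ofReal (‖h‖ ^ (s - d)) ∂μ :=
        setLIntegral_mono' measurableSet_closedBall hpt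
    _ = ENNReal.ofReal (S ^ p * (d * μ.real (ball 0 1) / s * δ ^ s)) := by
        rw [lintegral_const_mul' _ _ ENNReal.ofReal_ne_top,
          lintegral_closedBall_norm_rpow μ hs hδ, ← ENNReal.ofReal_mul (by positivity)]

end AddHaar

theorem gagliardoSeminorm_le_of_nikolskii {n : ℕ} [NeZero n] {F : Type*} [NormedAddCommGroup F]
    [MeasurableSpace F] [BorelSpace F] [SecondCountableTopology F]
    {f : EuclideanSpace ℝ (Fin n) → F} (hf : Measurable f) (B : Set (EuclideanSpace ℝ (Fin n)))
    {p α β S δ : ℝ} (hp : 1 ≤ p) (hβ : 0 ≤ β) (hβα : β < α) (hS : 0 ≤ S) (hδ : 0 < δ)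
    (hnik : ∀ h : EuclideanSpace ℝ (Fin n), 0 < ‖h‖ → ‖h‖ ≤ δ →
      (∫⁻ x in B, (‖f (x + h) - f x‖₊ : ℝ≥0∞) ^ p) ^ (1 / p) ≤ ENNReal.ofReal (S * ‖h‖ ^ α)) :
    gagliardoSeminorm B f β p ≤
      ENNReal.ofReal ((n * volume.real (ball (0 : EuclideanSpace ℝ (Fin n)) 1) /
          ((α - β) * p)) ^ (1 / p) * δ ^ (α - β) * S) +
        2 * volume B ^ (1 / p) * ENNReal.ofReal (δ ^ (-(n / p + β))) * lpNormOn B f p := by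
  have hp0 : 0 < p := by linarith
  have hp' : 0 ≤ 1 / p := by positivity
  set ω := volume.real (ball (0 : EuclideanSpace ℝ (Fin n)) 1)
  set D : EuclideanSpace ℝ (Fin n) → EuclideanSpace ℝ (Fin n) → ℝ≥0∞ :=
    fun x y => (‖f x - f y‖₊ : ℝ≥0∞) ^ p
  have hD : Measurable (Function.uncurry D) :=
    ((hf.comp measurable_fst).sub (hf.comp measurable_snd)).nnnorm.coe_nnreal_ennreal.pow_const p
  set near := ∫⁻ h in closedBall 0 δ, (∫⁻ y in B, D (y + h) y) / ‖h‖ₑ ^ ((n : ℝ) + β * p)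
  set far := ∫⁻ x in B, ∫⁻ y in B, D x y
  have hnear : near ^ (1 / p) ≤
      ENNReal.ofReal ((n * ω / ((α - β) * p)) ^ (1 / p) * δ ^ (α - β) * S) := by
    have := setLIntegral_closedBall_div_norm_rpow_le volume hp0 hβα hS hδ.le
      (by simp [hp0]) hnik
    rw [finrank_euclideanSpace_fin] at this
    refine (ENNReal.rpow_le_rpow this hp').trans_eq ?_
    rw [ENNReal.ofReal_rpow_of_nonneg (by positivity) hp', Real.mul_rpow (by positivity)
      (by positivity), Real.mul_rpow (by positivity) (by positivity), ← Real.rpow_mul hS,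
      ← Real.rpow_mul hδ.le, mul_one_div_cancel hp0.ne', Real.rpow_one, mul_assoc,
      mul_one_div_cancel hp0.ne', mul_one, mul_comm]
  have hfar : (far / ENNReal.ofReal δ ^ ((n : ℝ) + β * p)) ^ (1 / p) ≤
      2 * volume B ^ (1 / p) * ENNReal.ofReal (δ ^ (-(n / p + β))) * lpNormOn B f p := by
    rw [ENNReal.ofReal_rpow_of_pos hδ, div_eq_mul_inv, ← ENNReal.ofReal_inv_of_pos (by positivity),
      ← Real.rpow_neg hδ.le]
    refine (ENNReal.rpow_le_rpow (mul_le_mul_left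
      (setLIntegral_setLIntegral_nnnorm_sub_rpow_le hf hp B) _) hp').trans_eq ?_
    rw [ENNReal.mul_rpow_of_nonneg _ _ hp', ENNReal.mul_rpow_of_nonneg _ _ hp',
      ENNReal.mul_rpow_of_nonneg _ _ hp', ← ENNReal.rpow_mul, mul_one_div_cancel hp0.ne',
      ENNReal.rpow_one, ENNReal.ofReal_rpow_of_nonneg (by positivity) hp', ← Real.rpow_mul hδ.le,
      mul_right_comm _ (_ ^ (1 / p))]
    congr 4
    field_simp
  calc gagliardoSeminorm B f β p
      ≤ (near + far / ENNReal.ofReal δ ^ ((n : ℝ) + β * p)) ^ (1 / p) :=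
        ENNReal.rpow_le_rpow (setLIntegral_setLIntegral_div_edist_rpow_le volume hD B
          (by positivity)) hp'
    _ ≤ near ^ (1 / p) + (far / ENNReal.ofReal δ ^ ((n : ℝ) + β * p)) ^ (1 / p) :=
        ENNReal.rpow_add_le_add_rpow _ _ hp' ((div_le_one hp0).2 hp)
    _ ≤ _ := add_le_add hnear hfar

noncomputable def nikolskiiConst (n : ℕ) (p : ℝ) : ℝ :=
  (n * volume.real (ball (0 : EuclideanSpace ℝ (Fin n)) 1)) ^ (1 / p) +
    2 * volume.real (ball (0 : EuclideanSpace ℝ (Fin n)) 1) ^ (1 / p) + 1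

theorem nikolskiiConst_pos (n : ℕ) (p : ℝ) : 0 < nikolskiiConst n p := by
  unfold nikolskiiConst
  positivity

theorem lpNormOn_mono_set {n : ℕ} {F : Type*} [NormedAddCommGroup F]
    {U V : Set (EuclideanSpace ℝ (Fin n))} (hUV : U ⊆ V) (g : EuclideanSpace ℝ (Fin n) → F)
    {p : ℝ} (hp : 0 ≤ p) : lpNormOn U g p ≤ lpNormOn V g p :=
  ENNReal.rpow_le_rpow (lintegral_mono_set hUV) (by positivity)

theorem lpNormOn_add_gagliardoSeminorm_le_of_nikolskii {n : ℕ} [NeZero n] {F : Type*}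
    [NormedAddCommGroup F] [MeasurableSpace F] [BorelSpace F] [SecondCountableTopology F]
    {f : EuclideanSpace ℝ (Fin n) → F} (hf : Measurable f) {B B' : Set (EuclideanSpace ℝ (Fin n))}
    (hBB' : B ⊆ B') (hB : volume B ≤ volume (ball (0 : EuclideanSpace ℝ (Fin n)) 1))
    {p α β S δ : ℝ} (hp : 1 ≤ p) (hβ : 0 ≤ β) (hβα : β < α) (hS : 0 ≤ S) (hδ : 0 < δ)
    (hδ1 : δ ≤ 1)
    (hnik : ∀ h : EuclideanSpace ℝ (Fin n), 0 < ‖h‖ → ‖h‖ ≤ δ →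
      (∫⁻ x in B, (‖f (x + h) - f x‖₊ : ℝ≥0∞) ^ p) ^ (1 / p) ≤ ENNReal.ofReal (S * ‖h‖ ^ α)) :
    lpNormOn B f p + gagliardoSeminorm B f β p ≤
      ENNReal.ofReal (nikolskiiConst n p / (α - β) ^ (1 / p) * δ ^ (α - β) * S) +
        ENNReal.ofReal (nikolskiiConst n p * δ ^ (-(n / p + β))) * lpNormOn B' f p := by
  set ω := volume.real (ball (0 : EuclideanSpace ℝ (Fin n)) 1)
  set L := lpNormOn B' f p
  have hω : 0 ≤ ω := measureReal_nonneg
  have hαβ : 0 < α - β := sub_pos.2 hβα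
  have hvol : volume B ^ (1 / p) ≤ ENNReal.ofReal (ω ^ (1 / p)) := by
    rw [← ENNReal.ofReal_rpow_of_nonneg hω (by positivity), ofReal_measureReal]
    gcongr
  have hδe : 1 ≤ δ ^ (-(n / p + β)) :=
    Real.one_le_rpow_of_pos_of_le_one_of_nonpos hδ hδ1 (by simp only [neg_nonpos]; positivity)
  have hnear : (n * ω / ((α - β) * p)) ^ (1 / p) ≤ nikolskiiConst n p / (α - β) ^ (1 / p) :=
    calc (n * ω / ((α - β) * p)) ^ (1 / p) ≤ (n * ω / (α - β)) ^ (1 / p) := by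
          gcongr
          exact le_mul_of_one_le_right hαβ.le hp
      _ = (n * ω) ^ (1 / p) / (α - β) ^ (1 / p) := Real.div_rpow (by positivity) hαβ.le _
      _ ≤ nikolskiiConst n p / (α - β) ^ (1 / p) := by
          unfold nikolskiiConst
          gcongr
          linarith [Real.rpow_nonneg hω (1 / p)]
  have hfar : 1 + 2 * ENNReal.ofReal (ω ^ (1 / p)) * ENNReal.ofReal (δ ^ (-(n / p + β))) ≤
      ENNReal.ofReal (nikolskiiConst n p * δ ^ (-(n / p + β))) := by
    rw [mul_assoc, ← ENNReal.ofReal_mul (by positivity), ← ENNReal.ofReal_ofNat 2,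
      ← ENNReal.ofReal_mul (by norm_num), ← ENNReal.ofReal_one,
      ← ENNReal.ofReal_add (by norm_num) (by positivity)]
    refine ENNReal.ofReal_le_ofReal ?_
    unfold nikolskiiConst
    nlinarith [Real.rpow_nonneg (mul_nonneg (Nat.cast_nonneg n) hω) (1 / p)]
  calc lpNormOn B f p + gagliardoSeminorm B f β p
      ≤ L + (ENNReal.ofReal ((n * ω / ((α - β) * p)) ^ (1 / p) * δ ^ (α - β) * S) +
          2 * ENNReal.ofReal (ω ^ (1 / p)) * ENNReal.ofReal (δ ^ (-(n / p + β))) * L) := by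
        gcongr
        · exact lpNormOn_mono_set hBB' f (by linarith)
        · refine (gagliardoSeminorm_le_of_nikolskii hf B hp hβ hβα hS hδ hnik).trans ?_
          gcongr
          exact lpNormOn_mono_set hBB' f (by linarith)
    _ = ENNReal.ofReal ((n * ω / ((α - β) * p)) ^ (1 / p) * δ ^ (α - β) * S) +
          (1 + 2 * ENNReal.ofReal (ω ^ (1 / p)) * ENNReal.ofReal (δ ^ (-(n / p + β)))) * L := by
        ring
    _ ≤ _ := by gcongr

/-- Quantified local embedding of Nikol'skii spaces into fractional Sobolev spaces (Lemma 2.2):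
if `(∫_{B_ϱ} |f(x+h)-f(x)|^p dx)^{1/p} ≤ S|h|^α` for all `0 < |h| ≤ (r-ϱ)/K`, then for every
`β ∈ (0,α)` one has
`‖f‖_{L^p(B_ϱ)} + [f]_{β,p;B_ϱ} ≤ c/(α-β)^{1/p} ((r-ϱ)/K)^{α-β} S + c (K/(r-ϱ))^{n/p+β} ‖f‖_{L^p(B_r)}`
with `c` depending only on `n, p`. -/
theorem stmt_2 (n : ℕ) (p : ℝ) (hn : 1 ≤ n) (hp : 1 < p) :
    ∃ c : ℝ, 0 < c ∧
      ∀ (k : ℕ) (_ : 1 ≤ k) (x₀ : EuclideanSpace ℝ (Fin n)) (r ϱ : ℝ)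
        (f : EuclideanSpace ℝ (Fin n) → EuclideanSpace ℝ (Fin k)) (α S K β : ℝ),
        0 < ϱ → ϱ < r → r ≤ 1 →
        Measurable f →
        lpNormOn (Metric.ball x₀ r) f p < ⊤ →
        α ∈ Set.Ioc (0 : ℝ) 1 → 1 ≤ S → 1 ≤ K →
        (∀ h : EuclideanSpace ℝ (Fin n), 0 < ‖h‖ → ‖h‖ ≤ (r - ϱ) / K →
          (∫⁻ x in Metric.ball x₀ ϱ, (‖f (x + h) - f x‖₊ : ℝ≥0∞) ^ p) ^ (1 / p) ≤
            ENNReal.ofReal (S * ‖h‖ ^ α)) →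
        β ∈ Set.Ioo 0 α →
        lpNormOn (Metric.ball x₀ ϱ) f p + gagliardoSeminorm (Metric.ball x₀ ϱ) f β p ≤
          ENNReal.ofReal (c / (α - β) ^ (1 / p) * ((r - ϱ) / K) ^ (α - β) * S) +
            ENNReal.ofReal (c * (K / (r - ϱ)) ^ ((n : ℝ) / p + β)) *
              lpNormOn (Metric.ball x₀ r) f p := by
  have : NeZero n := ⟨by omega⟩
  refine ⟨nikolskiiConst n p, nikolskiiConst_pos n p, ?_⟩
  intro k _ x₀ r ϱ f α S K β hϱ hϱr hr1 hf _ _ hS hK hnik ⟨hβ, hβα⟩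
  have hδ : 0 < (r - ϱ) / K := div_pos (by linarith) (by linarith)
  have hδ1 : (r - ϱ) / K ≤ 1 := (div_le_one (by linarith)).2 (by linarith)
  have hB : volume (ball x₀ ϱ) ≤ volume (ball (0 : EuclideanSpace ℝ (Fin n)) 1) := by
    rw [← Measure.addHaar_ball_center volume x₀]
    exact measure_mono (ball_subset_ball (by linarith))
  rw [← inv_div (r - ϱ), Real.inv_rpow hδ.le, ← Real.rpow_neg hδ.le]
  exact lpNormOn_add_gagliardoSeminorm_le_of_nikolskii hf (ball_subset_ball hϱr.le) hB hp.le hβ.le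
    hβα (by linarith) hδ hδ1 hnik
end

section
/- Let n ≥ 1, γ ≥ 2, δ ∈ (0,1), λ ≥ 0, and let φ : ℝⁿ → [0,∞) be measurable, even (φ(−y) = φ(y) for all y), supported in the closed unit ball B₁, and such that c₀ := ∫_{B_{3/4} ∖ B_{1/2}} φ(y) dy > 0. Then for every z ∈ ℝⁿ one has ∫_{B₁} (λ² + |z + δy|²)^{(γ−2)/2} φ(y) dy ≥ (c₀/c(γ)) ((λ+δ)² + |z|²)^{(γ−2)/2}, where c(γ) depends only on γ. -/
open MeasureTheory
open scoped ENNReal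

/-- Lower ellipticity bound for mollified integrands, case `γ ≥ 2`: for `δ ∈ (0,1)`,
`λ ≥ 0`, a nonnegative even mollifier `φ` supported in the closed unit ball with
`c₀ := ∫_{B_{3/4}∖B_{1/2}} φ > 0`, and every `z`,
`∫_{B₁} (λ²+|z+δy|²)^{(γ-2)/2} φ(y) dy ≥ (c₀/c(γ)) ((λ+δ)²+|z|²)^{(γ-2)/2}`. -/
theorem stmt_15 (γ : ℝ) (hγ : 2 ≤ γ) :
    ∃ c : ℝ, 0 < c ∧
      ∀ (n : ℕ) (_ : 1 ≤ n) (δ lam : ℝ)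
        (φ : EuclideanSpace ℝ (Fin n) → ℝ) (z : EuclideanSpace ℝ (Fin n)),
        δ ∈ Set.Ioo (0 : ℝ) 1 → 0 ≤ lam →
        Measurable φ → (∀ y, 0 ≤ φ y) → (∀ y, φ (-y) = φ y) →
        (∀ y ∉ Metric.closedBall (0 : EuclideanSpace ℝ (Fin n)) 1, φ y = 0) →
        0 < (∫⁻ y in Metric.ball (0 : EuclideanSpace ℝ (Fin n)) (3 / 4) \
              Metric.ball (0 : EuclideanSpace ℝ (Fin n)) (1 / 2), ENNReal.ofReal (φ y)) →
        (∫⁻ y in Metric.ball (0 : EuclideanSpace ℝ (Fin n)) (3 / 4) \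
              Metric.ball (0 : EuclideanSpace ℝ (Fin n)) (1 / 2), ENNReal.ofReal (φ y)) /
            ENNReal.ofReal c *
            ENNReal.ofReal (((lam + δ) ^ 2 + ‖z‖ ^ 2) ^ ((γ - 2) / 2)) ≤
          ∫⁻ y in Metric.closedBall (0 : EuclideanSpace ℝ (Fin n)) 1,
            ENNReal.ofReal ((lam ^ 2 + ‖z + δ • y‖ ^ 2) ^ ((γ - 2) / 2) * φ y) := by
  have hp0 : 0 ≤ (γ - 2) / 2 := by linarith
  set p : ℝ := (γ - 2) / 2 with hp
  have h8 : (0 : ℝ) < (8 : ℝ) ^ p := Real.rpow_pos_of_pos (by norm_num) _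
  refine ⟨2 * 8 ^ p, by positivity, ?_⟩
  intro n _ δ lam φ z hδ hlam hφm hφ0 hφe hφsupp hc0
  obtain ⟨hδ0, hδ1⟩ := hδ
  set A : Set (EuclideanSpace ℝ (Fin n)) :=
    Metric.ball 0 (3 / 4) \ Metric.ball 0 (1 / 2) with hA
  set f : EuclideanSpace ℝ (Fin n) → ℝ≥0∞ := fun y => ENNReal.ofReal (φ y) with hf
  have hfm : Measurable f := hφm.ennreal_ofReal
  set S : ℝ := (lam + δ) ^ 2 + ‖z‖ ^ 2 with hS
  have hlamδ : 0 < lam + δ := by linarith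
  have hSpos : 0 < S := by positivity
  set P : Set (EuclideanSpace ℝ (Fin n)) := {y | 0 ≤ (inner ℝ z y : ℝ)} with hP
  have hPm : MeasurableSet P :=
    measurableSet_le measurable_const (continuous_const.inner continuous_id).measurable
  have hAm : MeasurableSet A :=
    Metric.isOpen_ball.measurableSet.diff Metric.isOpen_ball.measurableSet
  -- Step 1: the positive half carries at least half the mass
  have hneg : (∫⁻ y in A ∩ Pᶜ, f y) ≤ ∫⁻ y in A ∩ P, f y := by
    have hemb : MeasurableEmbedding (Neg.neg : EuclideanSpace ℝ (Fin n) → _) :=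
      (MeasurableEquiv.neg _).measurableEmbedding
    have hmp := (Measure.measurePreserving_neg
      (volume : Measure (EuclideanSpace ℝ (Fin n)))).setLIntegral_comp_preimage_emb hemb f
      (A ∩ Pᶜ)
    have hpre : (Neg.neg ⁻¹' (A ∩ Pᶜ) : Set (EuclideanSpace ℝ (Fin n)))
        = A ∩ {y | 0 < (inner ℝ z y : ℝ)} := by
      ext y
      simp only [Set.mem_preimage, Set.mem_inter_iff, Set.mem_compl_iff, hP, hA,
        Set.mem_setOf_eq, Set.mem_diff, mem_ball_zero_iff, norm_neg, inner_neg_right,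
        not_le, Left.neg_neg_iff]
    have hfe : ∀ y, f (-y) = f y := fun y => by simp [hf, hφe y]
    calc (∫⁻ y in A ∩ Pᶜ, f y)
        = ∫⁻ y in A ∩ {y | 0 < (inner ℝ z y : ℝ)}, f y := by
          rw [← hmp, hpre]; exact lintegral_congr fun y => hfe y
      _ ≤ ∫⁻ y in A ∩ P, f y := by
          refine lintegral_mono_set (Set.inter_subset_inter_right _ ?_)
          intro y hy
          show (0 : ℝ) ≤ inner ℝ z y
          exact le_of_lt hy
  have hsplit : (∫⁻ y in A, f y) = (∫⁻ y in A ∩ P, f y) + ∫⁻ y in A ∩ Pᶜ, f y := by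
    have hd : Disjoint (A ∩ P) (A ∩ Pᶜ) :=
      Disjoint.mono Set.inter_subset_right Set.inter_subset_right disjoint_compl_right
    have hu : (A ∩ P) ∪ (A ∩ Pᶜ) = A := by
      rw [← Set.inter_union_distrib_left, Set.union_compl_self, Set.inter_univ]
    conv_lhs => rw [← hu]
    rw [lintegral_union (hAm.inter hPm.compl) hd]
  have hhalf : (∫⁻ y in A, f y) ≤ 2 * ∫⁻ y in A ∩ P, f y := by
    rw [hsplit, two_mul]
    exact add_le_add le_rfl hneg
  -- Step 2: pointwise lower bound on the positive half
  have hpoint : ∀ y ∈ A ∩ P,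
      ENNReal.ofReal ((S / 8) ^ p) * f y
        ≤ ENNReal.ofReal ((lam ^ 2 + ‖z + δ • y‖ ^ 2) ^ p * φ y) := by
    rintro y ⟨hyA, hyP⟩
    have hy : (1 / 2 : ℝ) ≤ ‖y‖ := by
      have := hyA.2
      rw [mem_ball_zero_iff, not_lt] at this
      exact this
    have hin : 0 ≤ (inner ℝ z y : ℝ) := hyP
    have hexp : ‖z + δ • y‖ ^ 2 = ‖z‖ ^ 2 + 2 * (δ * (inner ℝ z y : ℝ)) + δ ^ 2 * ‖y‖ ^ 2 := by
      rw [norm_add_sq_real, real_inner_smul_right, norm_smul, Real.norm_eq_abs,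
        abs_of_pos hδ0, mul_pow]
    have hy2 : (1 / 2 : ℝ) ^ 2 ≤ ‖y‖ ^ 2 := pow_le_pow_left₀ (by norm_num) hy 2
    have hbase : S / 8 ≤ lam ^ 2 + ‖z + δ • y‖ ^ 2 := by
      rw [hexp, hS]
      nlinarith [sq_nonneg (lam - δ), mul_nonneg hδ0.le hin,
        mul_le_mul_of_nonneg_left hy2 (sq_nonneg δ), sq_nonneg ‖z‖]
    have hr : (S / 8) ^ p ≤ (lam ^ 2 + ‖z + δ • y‖ ^ 2) ^ p :=
      Real.rpow_le_rpow (by positivity) hbase hp0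
    rw [hf, ← ENNReal.ofReal_mul (by positivity)]
    exact ENNReal.ofReal_le_ofReal (mul_le_mul_of_nonneg_right hr (hφ0 y))
  -- Step 3: put things together
  set K : ℝ≥0∞ := ENNReal.ofReal ((S / 8) ^ p) with hK
  set x : ℝ≥0∞ := ENNReal.ofReal ((8 : ℝ) ^ p) with hx
  have hx0 : x ≠ 0 := (ENNReal.ofReal_pos.mpr h8).ne'
  have hxt : x ≠ ⊤ := ENNReal.ofReal_ne_top
  have hSK : ENNReal.ofReal (S ^ p) = x * K := by
    have h8S : (8 : ℝ) * (S / 8) = S := by ring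
    rw [hx, hK, ← ENNReal.ofReal_mul h8.le,
      ← Real.mul_rpow (by norm_num) (by positivity), h8S]
  have hc : ENNReal.ofReal (2 * 8 ^ p) = 2 * x := by
    rw [ENNReal.ofReal_mul (by norm_num : (0:ℝ) ≤ 2), hx, ENNReal.ofReal_ofNat]
  set I : ℝ≥0∞ := ∫⁻ y in A ∩ P, f y with hI
  have hsubset : A ∩ P ⊆ Metric.closedBall (0 : EuclideanSpace ℝ (Fin n)) 1 := by
    intro y hy
    have := hy.1.1
    rw [mem_ball_zero_iff] at this
    rw [Metric.mem_closedBall, dist_zero_right]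
    linarith
  have hfinal : K * I ≤ ∫⁻ y in Metric.closedBall (0 : EuclideanSpace ℝ (Fin n)) 1,
      ENNReal.ofReal ((lam ^ 2 + ‖z + δ • y‖ ^ 2) ^ p * φ y) := by
    calc K * I = ∫⁻ y in A ∩ P, K * f y := (lintegral_const_mul K hfm).symm
      _ ≤ ∫⁻ y in A ∩ P, ENNReal.ofReal ((lam ^ 2 + ‖z + δ • y‖ ^ 2) ^ p * φ y) :=
          setLIntegral_mono' (hAm.inter hPm) hpoint
      _ ≤ _ := lintegral_mono_set hsubset
  calc (∫⁻ y in A, f y) / ENNReal.ofReal (2 * 8 ^ p) * ENNReal.ofReal (S ^ p)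
      ≤ (2 * I) / (2 * x) * (x * K) := by
        rw [hc, hSK]
        exact mul_le_mul_left (ENNReal.div_le_div_right hhalf _) _
    _ = I / x * (x * K) := by
        rw [ENNReal.mul_div_mul_left _ _ (by norm_num) (by norm_num)]
    _ = K * I := by
        rw [← mul_assoc, ENNReal.div_mul_cancel hx0 hxt, mul_comm]
    _ ≤ _ := hfinal
end
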